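/- For every natural number k ≥ 1, all natural numbers x, y, z, and every choice of bits b_1, …, b_k ∈ {0,1}, letting w = ∑_{l=1}^{k} b_l · 2^{k-l}, one has e(z·w / 2^k) · ∏_{l=1}^{k} e(b_l · (y mod 2^l)·x / 2^l) = e((((z + y·x) mod 2^k)·w) / 2^k). (This is the correctness of the hybrid quantum multiply-add circuit: multiplying the w-indexed amplitude phase of QFT|z⟩ by the phases contributed by the operator M(y,x) = M_1(y,x) ⊗ ⋯ ⊗ M_k(y,x) yields the w-indexed amplitude phase of QFT|(z + y·x) mod 2^k⟩, so that applying QFT† and measuring returns z + y·x modulo 2^k.) -/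

import Mathlib

/-!
The phase `e` is a character of `(ℝ, +)` with period `1`. Rewriting the `l`-th factor over the
common denominator `2^k` and dropping `y mod 2^l` to `y` (which changes its argument by an
integer), the product collapses to `e(y·x·w / 2^k)`, because `w = ∑ b_l 2^(k-l)`. Together with
`e(z·w / 2^k)` this gives `e((z + y·x)·w / 2^k)`, and reducing `z + y·x` modulo `2^k` again only
changes the argument by an integer.
-/

/-- `e θ = exp(2πiθ)`. -/
noncomputable def e (θ : ℝ) : ℂ := Complex.exp (2 * Real.pi * Complex.I * θ)

lemma e_add (a c : ℝ) : e (a + c) = e a * e c := by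
  rw [e, e, e, ← Complex.exp_add]
  push_cast
  ring_nf

lemma e_intCast (n : ℤ) : e n = 1 := by
  rw [e, ← Complex.exp_int_mul_two_pi_mul_I n]
  push_cast
  ring_nf

lemma e_add_intCast (a : ℝ) (n : ℤ) : e (a + n) = e a := by
  rw [e_add, e_intCast, mul_one]

lemma e_sum {ι : Type*} (s : Finset ι) (f : ι → ℝ) :
    e (∑ i ∈ s, f i) = ∏ i ∈ s, e (f i) := by
  simp only [e, Complex.ofReal_sum, Finset.mul_sum, Complex.exp_sum]

lemma e_natCast_mod_mul_div (a c n : ℕ) :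
    e (((a % n * c : ℕ) : ℝ) / n) = e (((a * c : ℕ) : ℝ) / n) := by
  rcases eq_or_ne n 0 with rfl | hn
  · simp
  set q := a / n with hq
  have hsplit : ((a * c : ℕ) : ℝ) / n = ((a % n * c : ℕ) : ℝ) / n + ((q * c : ℕ) : ℤ) := by
    conv_lhs => rw [← Nat.mod_add_div a n, ← hq]
    push_cast
    field_simp
  rw [hsplit, e_add_intCast]

theorem qmac_correctness_general (k x y z : ℕ) (b : ℕ → ℕ)
    (w : ℕ) (hw : w = ∑ l ∈ Finset.Icc 1 k, b l * 2 ^ (k - l)) :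
    e (((z * w : ℕ) : ℝ) / (2 ^ k : ℝ)) *
        ∏ l ∈ Finset.Icc 1 k, e (((b l * (y % 2 ^ l) * x : ℕ) : ℝ) / (2 ^ l : ℝ)) =
      e (((((z + y * x) % 2 ^ k) * w : ℕ) : ℝ) / (2 ^ k : ℝ)) := by
  have hfactor : ∀ l ∈ Finset.Icc 1 k,
      e (((b l * (y % 2 ^ l) * x : ℕ) : ℝ) / (2 ^ l : ℝ)) =
        e (((y * x * b l * 2 ^ (k - l) : ℕ) : ℝ) / (2 ^ k : ℝ)) := by
    intro l hl
    have hpow : (2 : ℝ) ^ k = 2 ^ l * 2 ^ (k - l) := by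
      rw [← pow_add, Nat.add_sub_cancel' (Finset.mem_Icc.mp hl).2]
    have hmod := e_natCast_mod_mul_div y (b l * x) (2 ^ l)
    rw [hpow]
    push_cast at hmod ⊢
    rw [mul_comm (b l : ℝ), mul_assoc, hmod]
    congr 1
    field_simp
  calc _ = e (((z * w : ℕ) : ℝ) / (2 ^ k : ℝ) +
          ∑ l ∈ Finset.Icc 1 k, ((y * x * b l * 2 ^ (k - l) : ℕ) : ℝ) / (2 ^ k : ℝ)) := by
        rw [Finset.prod_congr rfl hfactor, e_add, e_sum]
    _ = e ((((z + y * x) * w : ℕ) : ℝ) / (2 ^ k : ℝ)) := by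
        rw [← Finset.sum_div, ← add_div, hw]
        congr 2
        push_cast [Finset.mul_sum, ← Finset.sum_add_distrib]
        exact Finset.sum_congr rfl fun _ _ => by ring
    _ = _ := by
        have hmod := e_natCast_mod_mul_div (z + y * x) w (2 ^ k)
        push_cast at hmod ⊢
        exact hmod.symm

/-- Correctness of the hybrid quantum multiply-add circuit: for `k ≥ 1`, all
`x y z : ℕ`, and bits `b 1, …, b k ∈ {0,1}` with `w = ∑_{l=1}^k b l * 2^(k-l)`,
`e(z·w / 2^k) · ∏_{l=1}^k e(b l · (y mod 2^l)·x / 2^l)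
  = e((((z + y·x) mod 2^k)·w) / 2^k)`. -/
theorem qmac_correctness (k x y z : ℕ) (hk : 1 ≤ k) (b : ℕ → ℕ)
    (hb : ∀ l ∈ Finset.Icc 1 k, b l = 0 ∨ b l = 1)
    (w : ℕ) (hw : w = ∑ l ∈ Finset.Icc 1 k, b l * 2 ^ (k - l)) :
    e (((z * w : ℕ) : ℝ) / (2 ^ k : ℝ)) *
        ∏ l ∈ Finset.Icc 1 k, e (((b l * (y % 2 ^ l) * x : ℕ) : ℝ) / (2 ^ l : ℝ)) =
      e (((((z + y * x) % 2 ^ k) * w : ℕ) : ℝ) / (2 ^ k : ℝ)) :=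
  qmac_correctness_general k x y z b w hw
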